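/- Let p > 0, let A be a complex n×n matrix whose spectrum belongs to P_e = {λ ∈ ℂ : (Im λ)² > 2p·Re λ}, and let H be a Hermitian positive definite matrix satisfying HA + A*H − (1/(2p))·A*HA + (1/(4p))·(HA² + (A*)²H) = −I. If B is a complex n×n matrix such that HB + B*H − (1/(2p))·(A*HB + B*HA + B*HB) + (1/(4p))·(H(AB + BA + B²) + (AB + BA + B²)*H) < I (i.e., I minus this matrix is positive definite), then the spectrum of A + B also belongs to P_e. -/

import Mathlib

open Matrix
open scoped ComplexOrder

/-!
Write `Lₚ(H, C) = HC + C*H - (1/2p) C*HC + (1/4p)(HC² + C*²H)`. The hypotheses say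
`Lₚ(H, A) = -I` and `Lₚ(H, A + B) - Lₚ(H, A) < I`, so `Lₚ(H, A + B)` is negative definite.
On an eigenvector `(A + B) v = μ v` the form collapses to a scalar,
`v* Lₚ(H, A + B) v = (2 Re μ - (Im μ)²/p) · v* H v`, and `v* H v > 0` forces `2p Re μ < (Im μ)²`.
-/

theorem Matrix.exists_mulVec_eq_smul_of_mem_spectrum {K ι : Type*} [Field K] [Fintype ι]
    [DecidableEq ι] {C : Matrix ι ι K} {μ : K} (hμ : μ ∈ spectrum K C) :
    ∃ v ≠ 0, C *ᵥ v = μ • v := by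
  rw [← spectrum_toLin'] at hμ
  obtain ⟨v, hv⟩ := (Module.End.HasEigenvalue.of_mem_spectrum hμ).exists_hasEigenvector
  exact ⟨v, hv.2, hv.apply_eq_smul⟩

def parabolaExterior (p : ℝ) : Set ℂ := {μ | 2 * p * μ.re < μ.im ^ 2}

section ParabolaLyapunov

variable {ι : Type*} [Fintype ι] [DecidableEq ι]

noncomputable def parabolaLyapunov (p : ℝ) (H C : Matrix ι ι ℂ) : Matrix ι ι ℂ :=
  H * C + Cᴴ * H - ((1 / (2 * p) : ℝ) : ℂ) • (Cᴴ * H * C)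
    + ((1 / (4 * p) : ℝ) : ℂ) • (H * C ^ 2 + Cᴴ ^ 2 * H)

theorem parabolaLyapunov_add (p : ℝ) (H A B : Matrix ι ι ℂ) :
    parabolaLyapunov p H (A + B) = parabolaLyapunov p H A
      + (H * B + Bᴴ * H - ((1 / (2 * p) : ℝ) : ℂ) • (Aᴴ * H * B + Bᴴ * H * A + Bᴴ * H * B)
        + ((1 / (4 * p) : ℝ) : ℂ) •
          (H * (A * B + B * A + B ^ 2) + (A * B + B * A + B ^ 2)ᴴ * H)) := by
  simp only [parabolaLyapunov, conjTranspose_add, conjTranspose_mul, sq, mul_add, add_mul,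
    smul_add]
  abel

theorem dotProduct_parabolaLyapunov_mulVec_of_mulVec_eq_smul (p : ℝ) (H : Matrix ι ι ℂ)
    {C : Matrix ι ι ℂ} {μ : ℂ} {v : ι → ℂ} (hv : C *ᵥ v = μ • v) :
    star v ⬝ᵥ (parabolaLyapunov p H C *ᵥ v)
      = ((2 * μ.re - μ.im ^ 2 / p : ℝ) : ℂ) * (star v ⬝ᵥ (H *ᵥ v)) := by
  have hv_star (w : ι → ℂ) : star v ⬝ᵥ (Cᴴ *ᵥ w) = star μ * (star v ⬝ᵥ w) := by
    rw [dotProduct_mulVec, ← star_mulVec, hv, star_smul, smul_dotProduct, smul_eq_mul]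
  have hcoeff : μ + star μ - ((1 / (2 * p) : ℝ) : ℂ) * (star μ * μ)
      + ((1 / (4 * p) : ℝ) : ℂ) * (μ * μ + star μ * star μ)
      = ((2 * μ.re - μ.im ^ 2 / p : ℝ) : ℂ) := by
    apply Complex.ext <;> simp [sq] <;> ring
  rw [← hcoeff]
  simp only [parabolaLyapunov, sq, mul_assoc, ← mulVec_mulVec, add_mulVec, sub_mulVec,
    smul_mulVec, hv, mulVec_smul, dotProduct_add, dotProduct_sub, dotProduct_smul, hv_star,
    smul_eq_mul]
  ring

theorem spectrum_subset_parabolaExterior {p : ℝ} (hp : 0 < p) {H C : Matrix ι ι ℂ}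
    (hH : H.PosDef) (hL : (-parabolaLyapunov p H C).PosDef) :
    spectrum ℂ C ⊆ parabolaExterior p := by
  intro μ hμ
  obtain ⟨v, hv0, hv⟩ := exists_mulVec_eq_smul_of_mem_spectrum hμ
  have hform := hL.dotProduct_mulVec_pos hv0
  rw [neg_mulVec, dotProduct_neg, dotProduct_parabolaLyapunov_mulVec_of_mulVec_eq_smul p H hv,
    neg_pos] at hform
  have hcoeff : 2 * μ.re - μ.im ^ 2 / p < 0 := by
    by_contra! hnonneg
    exact (mul_nonneg (Complex.zero_le_real.mpr hnonneg)
      (hH.dotProduct_mulVec_pos hv0).le).not_gt hform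
  rw [sub_neg, lt_div_iff₀ hp] at hcoeff
  change 2 * p * μ.re < μ.im ^ 2
  linarith

end ParabolaLyapunov

theorem spectrum_perturbed_in_parabola_exterior_general {n : ℕ} (p : ℝ) (hp : 0 < p)
    (A : Matrix (Fin n) (Fin n) ℂ)
    (H : Matrix (Fin n) (Fin n) ℂ) (hH : H.PosDef)
    (heq : H * A + Aᴴ * H - ((1 / (2 * p) : ℝ) : ℂ) • (Aᴴ * H * A)
      + ((1 / (4 * p) : ℝ) : ℂ) • (H * A ^ 2 + Aᴴ ^ 2 * H) = -1)
    (B : Matrix (Fin n) (Fin n) ℂ)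
    (hB : (1 - (H * B + Bᴴ * H - ((1 / (2 * p) : ℝ) : ℂ) • (Aᴴ * H * B + Bᴴ * H * A + Bᴴ * H * B)
      + ((1 / (4 * p) : ℝ) : ℂ) •
        (H * (A * B + B * A + B ^ 2) + (A * B + B * A + B ^ 2)ᴴ * H))).PosDef) :
    ∀ μ ∈ spectrum ℂ (A + B), 2 * p * μ.re < μ.im ^ 2 := by
  refine spectrum_subset_parabolaExterior hp hH ?_
  rw [parabolaLyapunov_add, parabolaLyapunov, heq, neg_add, neg_neg, ← sub_eq_add_neg]
  exact hB

/-- Perturbation theorem for the exterior of the parabola: if the spectrum of `A`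
lies in `P_e`, `H > 0` solves the parabolic Lyapunov-type equation with right-hand
side `-I`, and the perturbation `B` satisfies the matrix inequality (17), then the
spectrum of `A + B` also lies in `P_e`. -/
theorem spectrum_perturbed_in_parabola_exterior {n : ℕ} (p : ℝ) (hp : 0 < p)
    (A : Matrix (Fin n) (Fin n) ℂ)
    (hA : ∀ μ ∈ spectrum ℂ A, 2 * p * μ.re < μ.im ^ 2)
    (H : Matrix (Fin n) (Fin n) ℂ) (hH : H.PosDef)
    (heq : H * A + Aᴴ * H - ((1 / (2 * p) : ℝ) : ℂ) • (Aᴴ * H * A)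
      + ((1 / (4 * p) : ℝ) : ℂ) • (H * A ^ 2 + Aᴴ ^ 2 * H) = -1)
    (B : Matrix (Fin n) (Fin n) ℂ)
    (hB : (1 - (H * B + Bᴴ * H - ((1 / (2 * p) : ℝ) : ℂ) • (Aᴴ * H * B + Bᴴ * H * A + Bᴴ * H * B)
      + ((1 / (4 * p) : ℝ) : ℂ) •
        (H * (A * B + B * A + B ^ 2) + (A * B + B * A + B ^ 2)ᴴ * H))).PosDef) :
    ∀ μ ∈ spectrum ℂ (A + B), 2 * p * μ.re < μ.im ^ 2 :=
  spectrum_perturbed_in_parabola_exterior_general p hp A H hH heq B hB
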